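/- arXiv:2411.00175 — 4 statements merged into one kernel-verified Lean document; each statement's English description precedes it below -/
import Mathlib

section
/- If a sequence of real numbers (a_n) satisfies a_m + a_n - 1 < a_{m+n} < a_m + a_n + 1 for all positive integers m, n, then there exists a real number ρ such that ρ·n - 1 < a_n < ρ·n + 1 for all n. -/
/-- If a sequence of real numbers satisfies the almost-additivity condition
`a m + a n - 1 < a (m+n) < a m + a n + 1` for all positive integers `m, n`,
then there exists `ρ` with `ρ*n - 1 < a n < ρ*n + 1` for all positive `n`. -/
theorem almost_additive_linear_growth (a : ℕ → ℝ)
    (h : ∀ m n : ℕ, 0 < m → 0 < n →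
      a m + a n - 1 < a (m + n) ∧ a (m + n) < a m + a n + 1) :
    ∃ ρ : ℝ, ∀ n : ℕ, 0 < n → ρ * n - 1 < a n ∧ a n < ρ * n + 1 := by
  -- multiplicative bound: |a (k*n) - k * a n| ≤ k - 1
  have key : ∀ n : ℕ, 0 < n → ∀ k : ℕ, 0 < k →
      (k : ℝ) * a n - ((k : ℝ) - 1) ≤ a (k * n) ∧
      a (k * n) ≤ (k : ℝ) * a n + ((k : ℝ) - 1) := by
    intro n hn k hk
    induction k with
    | zero => exact absurd hk (lt_irrefl 0)
    | succ k ih =>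
      rcases Nat.eq_zero_or_pos k with rfl | hk'
      · simp
      · obtain ⟨ih1, ih2⟩ := ih hk'
        obtain ⟨h1, h2⟩ := h (k * n) n (Nat.mul_pos hk' hn) hn
        have hrw : (k + 1) * n = k * n + n := Nat.succ_mul k n
        rw [hrw]
        push_cast
        constructor <;> nlinarith
  -- ratio bounds
  have hub : ∀ n : ℕ, 0 < n → ∀ k : ℕ, 0 < k →
      (a n - 1) / n ≤ a (k * n) / ((k * n : ℕ) : ℝ) ∧
      a (k * n) / ((k * n : ℕ) : ℝ) ≤ (a n + 1) / n := by
    intro n hn k hk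
    obtain ⟨h1, h2⟩ := key n hn k hk
    have hn' : (0:ℝ) < n := by exact_mod_cast hn
    have hk' : (0:ℝ) < k := by exact_mod_cast hk
    have hkn : ((k * n : ℕ) : ℝ) = (k:ℝ) * n := by push_cast; ring
    rw [hkn]
    constructor
    · rw [div_le_div_iff₀ hn' (by positivity)]
      nlinarith
    · rw [div_le_div_iff₀ (by positivity) hn']
      nlinarith
  -- difference bound
  have hdiff : ∀ m n : ℕ, 0 < m → 0 < n →
      |a m / m - a n / n| ≤ 1 / m + 1 / n := by
    intro m n hm hn
    obtain ⟨h1, h2⟩ := key n hn m hm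
    obtain ⟨h3, h4⟩ := key m hm n hn
    rw [Nat.mul_comm n m] at h3 h4
    have hm' : (0:ℝ) < m := by exact_mod_cast hm
    have hn' : (0:ℝ) < n := by exact_mod_cast hn
    have hm1 : (1:ℝ) ≤ m := by exact_mod_cast hm
    have hn1 : (1:ℝ) ≤ n := by exact_mod_cast hn
    have e1 : (1/(m:ℝ) + 1/n) - (a m / m - a n / n)
        = ((n + m) - (n * a m - m * a n)) / (m * n) := by
      field_simp
    have e2 : (1/(m:ℝ) + 1/n) - (a n / n - a m / m)
        = ((n + m) - (m * a n - n * a m)) / (m * n) := by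
      field_simp
    rw [abs_sub_le_iff]
    constructor
    · rw [← sub_nonneg, e1]
      apply div_nonneg _ (by positivity)
      nlinarith
    · rw [← sub_nonneg, e2]
      apply div_nonneg _ (by positivity)
      nlinarith
  -- Cauchy
  have hc : CauchySeq (fun n : ℕ => a n / n) := by
    rw [Metric.cauchySeq_iff]
    intro ε hε
    obtain ⟨N, hN⟩ := exists_nat_gt (2 / ε)
    refine ⟨N + 1, fun m hm n hn => ?_⟩
    have hm1 : 0 < m := lt_of_lt_of_le (Nat.succ_pos N) hm
    have hn1 : 0 < n := lt_of_lt_of_le (Nat.succ_pos N) hn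
    have hm' : (0:ℝ) < m := by exact_mod_cast hm1
    have hn' : (0:ℝ) < n := by exact_mod_cast hn1
    have hNm : 2 / ε < m := lt_of_lt_of_le hN (by exact_mod_cast Nat.le_of_succ_le hm)
    have hNn : 2 / ε < n := lt_of_lt_of_le hN (by exact_mod_cast Nat.le_of_succ_le hn)
    have h1m : 1 / (m:ℝ) < ε / 2 := by
      rw [div_lt_div_iff₀ hm' (by positivity)]
      rw [div_lt_iff₀ hε] at hNm
      linarith
    have h1n : 1 / (n:ℝ) < ε / 2 := by
      rw [div_lt_div_iff₀ hn' (by positivity)]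
      rw [div_lt_iff₀ hε] at hNn
      linarith
    calc dist (a m / m) (a n / n) = |a m / m - a n / n| := Real.dist_eq _ _
      _ ≤ 1 / m + 1 / n := hdiff m n hm1 hn1
      _ < ε := by linarith
  obtain ⟨ρ, hρ⟩ := cauchySeq_tendsto_of_complete hc
  -- limit bounds
  have hle : ∀ n : ℕ, 0 < n → (a n - 1) / n ≤ ρ ∧ ρ ≤ (a n + 1) / n := by
    intro n hn
    have hmul : Filter.Tendsto (fun k : ℕ => k * n) Filter.atTop Filter.atTop :=
      Filter.tendsto_atTop_mono (fun k => Nat.le_mul_of_pos_right k hn)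
        Filter.tendsto_id
    have hsub : Filter.Tendsto (fun k : ℕ => a (k * n) / ((k * n : ℕ) : ℝ))
        Filter.atTop (nhds ρ) := hρ.comp hmul
    constructor
    · refine ge_of_tendsto hsub ?_
      filter_upwards [Filter.eventually_ge_atTop 1] with k hk
      exact (hub n hn k hk).1
    · refine le_of_tendsto hsub ?_
      filter_upwards [Filter.eventually_ge_atTop 1] with k hk
      exact (hub n hn k hk).2
  refine ⟨ρ, fun n hn => ?_⟩
  obtain ⟨hl, hr⟩ := hle (2 * n) (by omega)
  obtain ⟨g1, g2⟩ := h n n hn hn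
  have hnn : n + n = 2 * n := by omega
  rw [hnn] at g1 g2
  have hn' : (0:ℝ) < n := by exact_mod_cast hn
  have h2n : (0:ℝ) < ((2 * n : ℕ) : ℝ) := by push_cast; positivity
  rw [div_le_iff₀ h2n] at hl
  rw [le_div_iff₀ h2n] at hr
  push_cast at hl hr
  constructor <;> nlinarith
end

section
/- Let f_s be a monotone family of circle maps with m flat spots and suppose for parameter s₀ the rotation number is irrational or rational with denominator > mN. Then there exists a flat spot index j such that the forward images f_{s₀}ⁿ(b_j(s₀)) for n = 0, 1, …, N-1 all avoid the union of the flat spots, where b_j(s₀) is the image of flat spot I_j. -/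
open Filter

/-- A (lift of a) continuous non-decreasing degree-one circle map with `m`
flat spots, `λ`-expanding outside the flat spots. -/
structure FlatSpotCircleMap where
  /-- number of flat spots -/
  m : ℕ
  hm : 1 ≤ m
  /-- expansion constant -/
  lam : ℝ
  hlam : 1 < lam
  /-- lift of the circle map -/
  f : ℝ → ℝ
  mono : Monotone f
  deg : ∀ x : ℝ, f (x + 1) = f x + 1
  /-- left endpoints of the flat spots -/
  u : Fin m → ℝ
  /-- right endpoints of the flat spots -/
  v : Fin m → ℝ
  hu : ∀ j, (0 : ℝ) ≤ u j
  hv : ∀ j, v j < 1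
  huv : ∀ j, u j < v j
  disj : ∀ i j, i ≠ j → Disjoint (Set.Icc (u i) (v i)) (Set.Icc (u j) (v j))
  /-- `f` is constant on each flat spot (and on all its integer translates) -/
  flat : ∀ j, ∀ x ∈ Set.Icc (u j) (v j), ∀ k : ℤ, f (x + k) = f (u j) + k
  /-- `f` is `λ`-expanding outside the flat spots -/
  expand : ∀ x : ℝ, (∀ j : Fin m, ∀ k : ℤ, x ∉ Set.Icc (u j + k) (v j + k)) →
    ∃ d : ℝ, HasDerivAt f d x ∧ lam < d

lemma FlatSpotCircleMap.map_add_int (F : FlatSpotCircleMap) (x : ℝ) (k : ℤ) :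
    F.f (x + k) = F.f x + k := by
  induction k using Int.induction_on with
  | zero => simp
  | succ n ih =>
      have h := F.deg (x + n)
      push_cast at ih ⊢
      rw [show x + ((n:ℝ) + 1) = (x + n) + 1 by ring, h, ih]; ring
  | pred n ih =>
      have h := F.deg (x + (-(n:ℝ) - 1))
      push_cast at ih ⊢
      rw [show x + (-(n:ℝ) - 1) + 1 = x + -(n:ℝ) by ring] at h
      linarith


lemma FlatSpotCircleMap.iterate_add_int (F : FlatSpotCircleMap) (n : ℕ) (x : ℝ) (k : ℤ) :
    F.f^[n] (x + k) = F.f^[n] x + k := by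
  induction n with
  | zero => simp
  | succ n ih => rw [Function.iterate_succ_apply', Function.iterate_succ_apply', ih,
      F.map_add_int]

lemma FlatSpotCircleMap.rot_eq (F : FlatSpotCircleMap) (T : ℕ) (hT : 1 ≤ T) (x : ℝ) (K : ℤ)
    (hx : F.f^[T] x = x + K) (ρ : ℝ)
    (hρ : Tendsto (fun n : ℕ => F.f^[n] 0 / n) atTop (nhds ρ)) :
    ρ = (K : ℝ) / T := by
  have hiter : ∀ q : ℕ, F.f^[q * T] x = x + (q : ℝ) * K := by
    intro q
    induction q with
    | zero => simp
    | succ q ih =>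
        rw [show (q+1) * T = T + q * T by ring, Function.iterate_add_apply, ih,
          show x + (q:ℝ) * K = x + ((q * K : ℤ) : ℝ) by push_cast; ring,
          F.iterate_add_int, hx]
        push_cast; ring
  have hbound : ∀ n : ℕ, F.f^[n] 0 + (⌊x⌋:ℝ) ≤ F.f^[n] x ∧ F.f^[n] x ≤ F.f^[n] 0 + ⌊x⌋ + 1 := by
    intro n
    have m1 : Monotone (F.f^[n]) := F.mono.iterate n
    constructor
    · have := m1 (Int.floor_le x)
      rwa [show ((⌊x⌋:ℝ)) = 0 + ((⌊x⌋:ℤ):ℝ) by push_cast; ring, F.iterate_add_int] at this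
    · have := m1 (Int.lt_floor_add_one x).le
      rw [show ((⌊x⌋:ℝ) + 1) = 0 + ((⌊x⌋ + 1 : ℤ):ℝ) by push_cast; ring, F.iterate_add_int] at this
      push_cast at this; linarith
  have hTpos : (0:ℝ) < T := by exact_mod_cast hT
  -- the subsequence q*T tends to ρ
  have hsub : Tendsto (fun q : ℕ => F.f^[q * T] 0 / (↑(q * T))) atTop (nhds ρ) := by
    apply hρ.comp
    apply tendsto_atTop_atTop.2
    intro b
    exact ⟨b, fun a ha => le_trans ha (Nat.le_mul_of_pos_right a hT)⟩
  set δ : ℕ → ℝ := fun q => F.f^[q * T] 0 - (q : ℝ) * K with hδdef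
  have hδb : ∀ q, |δ q| ≤ 1 := by
    intro q
    have h1 := (hbound (q * T)).1
    have h2 := (hbound (q * T)).2
    rw [hiter q] at h1 h2
    have hf1 : (⌊x⌋:ℝ) ≤ x := Int.floor_le x
    have hf2 : x < (⌊x⌋:ℝ) + 1 := Int.lt_floor_add_one x
    rw [abs_le]; constructor <;> simp only [hδdef] <;> nlinarith
  have hδ0 : Tendsto (fun q : ℕ => δ q / (↑(q * T))) atTop (nhds 0) := by
    refine squeeze_zero_norm (a := fun q : ℕ => (1 / (T:ℝ)) / ↑q) (fun q => ?_)
      (tendsto_const_div_atTop_nhds_zero_nat _)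
    rcases Nat.eq_zero_or_pos q with hq | hq
    · subst hq; simp
    · have hq' : (0:ℝ) < q := by exact_mod_cast hq
      have hprod : (0:ℝ) < (q:ℝ) * T := by positivity
      push_cast [Real.norm_eq_abs]
      rw [abs_div, abs_of_pos hprod, div_div, div_le_div_iff₀ hprod (by positivity)]
      nlinarith [hδb q, abs_nonneg (δ q)]
  have hlim2 : Tendsto (fun q : ℕ => F.f^[q * T] 0 / (↑(q * T))) atTop (nhds ((K:ℝ)/T + 0)) := by
    apply Tendsto.congr' _ (tendsto_const_nhds.add hδ0)
    filter_upwards [eventually_ge_atTop 1] with q hq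
    have hqT : ((↑(q*T)):ℝ) ≠ 0 := by
      have : 0 < q * T := Nat.mul_pos hq hT
      positivity
    have hq' : (q:ℝ) ≠ 0 := by positivity
    simp only [hδdef]
    push_cast at hqT ⊢
    field_simp
    ring
  rw [add_zero] at hlim2
  exact tendsto_nhds_unique hsub hlim2

/-- If the rotation number of a circle map with `m` flat spots is irrational
or rational with denominator `> mN`, then some flat spot image `b_j` has its
first `N` forward iterates avoiding all the flat spots. -/
theorem flat_spot_image_orbit_avoids_flat_spots (F : FlatSpotCircleMap)
    (N : ℕ) (hN : 1 ≤ N) (ρ : ℝ)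
    (hρ : Tendsto (fun n : ℕ => F.f^[n] 0 / n) atTop (nhds ρ))
    (h : Irrational ρ ∨ ∃ (p : ℤ) (q : ℕ), ρ = (p : ℝ) / q ∧
      Nat.Coprime p.natAbs q ∧ F.m * N < q) :
    ∃ j : Fin F.m, ∀ n < N, ∀ i : Fin F.m, ∀ k : ℤ,
      F.f^[n] (F.f (F.u j)) ∉ Set.Icc (F.u i + k) (F.v i + k) := by
  by_contra hcon
  push_neg at hcon
  set b : Fin F.m → ℝ := fun j => F.f (F.u j) with hbdef
  have step : ∀ j : Fin F.m, ∃ (n : ℕ) (i : Fin F.m) (k : ℤ),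
      n < N ∧ F.f^[n+1] (b j) = b i + k := by
    intro j
    obtain ⟨n, hn, i, k, hmem⟩ := hcon j
    refine ⟨n, i, k, hn, ?_⟩
    have hx : F.f^[n] (b j) - (k:ℝ) ∈ Set.Icc (F.u i) (F.v i) := by
      constructor
      · linarith [hmem.1]
      · linarith [hmem.2]
    have hflat := F.flat i _ hx k
    rw [sub_add_cancel] at hflat
    rw [Function.iterate_succ_apply', hflat]
  choose nf gf kf hnf hstep using step
  have orbit : ∀ t : ℕ, ∀ j : Fin F.m, ∃ (T : ℕ) (K : ℤ),
      t ≤ T ∧ T ≤ t * N ∧ F.f^[T] (b j) = b (gf^[t] j) + K := by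
    intro t
    induction t with
    | zero => intro j; exact ⟨0, 0, le_refl 0, by simp, by simp⟩
    | succ t ih =>
        intro j
        obtain ⟨T, K, hT1, hT2, hTeq⟩ := ih j
        refine ⟨(nf (gf^[t] j) + 1) + T, kf (gf^[t] j) + K, by omega, ?_, ?_⟩
        · have := hnf (gf^[t] j)
          have : nf (gf^[t] j) + 1 ≤ N := by omega
          calc (nf (gf^[t] j) + 1) + T ≤ N + t * N := by omega
            _ = (t+1) * N := by ring
        · rw [Function.iterate_add_apply, hTeq, F.iterate_add_int, hstep (gf^[t] j),
            Function.iterate_succ_apply']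
          push_cast; ring
  -- pigeonhole
  have j₀ : Fin F.m := ⟨0, F.hm⟩
  obtain ⟨a, b', hlt, heq⟩ : ∃ a b' : Fin (F.m+1), (a:ℕ) < (b':ℕ) ∧
      gf^[(a:ℕ)] j₀ = gf^[(b':ℕ)] j₀ := by
    obtain ⟨a, b', hab, heq⟩ := Fintype.exists_ne_map_eq_of_card_lt
      (fun t : Fin (F.m + 1) => gf^[(t:ℕ)] j₀) (by simp)
    rcases lt_or_gt_of_ne (fun hv : (a:ℕ) = (b':ℕ) => hab (Fin.ext hv)) with hv | hv
    exacts [⟨a, b', hv, heq⟩, ⟨b', a, hv, heq.symm⟩]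
  set c : Fin F.m := gf^[(a:ℕ)] j₀ with hcdef
  set t : ℕ := (b':ℕ) - (a:ℕ) with htdef
  have hper : gf^[t] c = c := by
    rw [hcdef, ← Function.iterate_add_apply, show t + (a:ℕ) = (b':ℕ) by omega, ← heq]
  obtain ⟨T, K, hT1, hT2, hTeq⟩ := orbit t c
  rw [hper] at hTeq
  have ht1 : 1 ≤ t := by omega
  have htm : t ≤ F.m := by have := b'.isLt; omega
  have hTmN : T ≤ F.m * N := le_trans hT2 (Nat.mul_le_mul_right N htm)
  have hTpos : 1 ≤ T := le_trans ht1 hT1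
  have hrho : ρ = (K : ℝ) / T := F.rot_eq T hTpos (b c) K hTeq ρ hρ
  rcases h with hirr | ⟨p, q, hpq, hcop, hq⟩
  · exact hirr ⟨(K:ℚ)/(T:ℚ), by rw [hrho]; push_cast; ring⟩
  · have hq1 : 1 ≤ q := by
      have := Nat.mul_pos F.hm hN
      omega
    have hqR : (0:ℝ) < q := by exact_mod_cast hq1
    have hTR : (0:ℝ) < T := by exact_mod_cast hTpos
    have hre : (p:ℝ) * T = (K:ℝ) * q := by
      rw [hpq] at hrho
      field_simp at hrho
      linarith [hrho]
    have hze : p * (T:ℤ) = K * q := by exact_mod_cast hre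
    have hdvd : (q:ℤ) ∣ p * (T:ℤ) := ⟨K, by rw [hze]; ring⟩
    have hdvdn : q ∣ T * p.natAbs := by
      have := Int.natAbs_dvd_natAbs.mpr hdvd
      simpa [Int.natAbs_mul, Nat.mul_comm] using this
    have hqT : q ∣ T := Nat.Coprime.dvd_of_dvd_mul_right hcop.symm hdvdn
    have := Nat.le_of_dvd (by omega) hqT
    omega
end

section
/- Let f : S¹ → S¹ be a continuous non-decreasing degree-one circle map that is constant on finitely many closed arcs and λ-expanding (λ > 1, differentiable with derivative > λ) outside these arcs. If f has rotation number 0, then f has a fixed point lying in one of the flat spots (i.e. some flat spot I_j contains a point x with f(x) = x). -/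
open Filter

namespace FlatSpotCircleMap

open Set

variable (F : FlatSpotCircleMap)

/-- periodicity for integer translates -/
lemma per : ∀ (x : ℝ) (k : ℤ), F.f (x + k) = F.f x + k := by
  intro x k
  induction k using Int.induction_on with
  | zero => simp
  | succ n ih =>
      have e : (x + ((n:ℤ) + 1 : ℤ) : ℝ) = (x + ((n:ℤ):ℝ)) + 1 := by push_cast; ring
      rw [e, F.deg, ih]; push_cast; ring
  | pred n ih =>
      have h := F.deg (x + ((-(n:ℤ) - 1 : ℤ):ℝ))
      have e : (x + ((-(n:ℤ) - 1 : ℤ):ℝ)) + 1 = x + ((-(n:ℤ) : ℤ):ℝ) := by push_cast; ring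
      rw [e, ih] at h
      have e2 : F.f (x + ((-(n:ℤ) - 1 : ℤ):ℝ)) = F.f x + ((-(n:ℤ) - 1 : ℤ):ℝ) := by
        push_cast at h ⊢; linarith
      rw [e2]

/-- value on translated flat spot -/
lemma flat_val (j : Fin F.m) (k : ℤ) {x : ℝ} (hx : x ∈ Icc (F.u j + (k:ℝ)) (F.v j + k)) :
    F.f x = F.f (F.u j) + k := by
  have hx' : x - k ∈ Icc (F.u j) (F.v j) := by
    constructor <;> [linarith [hx.1]; linarith [hx.2]]
  have := F.flat j (x - k) hx' k
  simpa using this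

/-- slope bounds near a point with derivative `> 1` -/
lemma slope_bounds {f : ℝ → ℝ} {d p : ℝ} (h : HasDerivAt f d p) (hd : 1 < d) :
    ∃ δ > 0, (∀ x, p < x → x < p + δ → x - p < f x - f p) ∧
      (∀ x, p - δ < x → x < p → f x - f p < x - p) := by
  have hs := hasDerivAt_iff_tendsto_slope.mp h
  have h1 : ∀ᶠ x in nhdsWithin p {p}ᶜ, 1 < slope f p x :=
    hs.eventually (eventually_gt_nhds hd)
  rw [eventually_nhdsWithin_iff, Metric.eventually_nhds_iff] at h1
  obtain ⟨δ, hδ, hδ'⟩ := h1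
  refine ⟨δ, hδ, ?_, ?_⟩
  · intro x hx1 hx2
    have hne : x ≠ p := ne_of_gt hx1
    have hd1 : dist x p < δ := by rw [Real.dist_eq, abs_lt]; constructor <;> linarith
    have := hδ' hd1 hne
    rw [slope_def_field, div_eq_mul_inv, ← div_eq_mul_inv, lt_div_iff₀ (by linarith : (0:ℝ) < x - p)] at this
    linarith
  · intro x hx1 hx2
    have hne : x ≠ p := ne_of_lt hx2
    have hd1 : dist x p < δ := by rw [Real.dist_eq, abs_lt]; constructor <;> linarith
    have := hδ' hd1 hne
    rw [slope_def_field, div_eq_mul_inv, ← div_eq_mul_inv, lt_div_iff_of_neg (by linarith : x - p < 0)] at this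
    linarith

/-- mean value estimate on intervals avoiding all flat spots -/
lemma mvt {s t : ℝ} (hst : s ≤ t)
    (hE : ∀ x ∈ Icc s t, ∀ j : Fin F.m, ∀ k : ℤ, x ∉ Icc (F.u j + (k:ℝ)) (F.v j + k)) :
    F.lam * (t - s) ≤ F.f t - F.f s := by
  have hder : ∀ x ∈ Icc s t, ∃ d, HasDerivAt F.f d x ∧ F.lam < d :=
    fun x hx => F.expand x (hE x hx)
  have hcont : ContinuousOn F.f (Icc s t) := fun x hx =>
    ((hder x hx).choose_spec.1.continuousAt).continuousWithinAt
  have hdiff : DifferentiableOn ℝ F.f (interior (Icc s t)) := fun x hx =>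
    (((hder x (interior_subset hx)).choose_spec.1).differentiableAt).differentiableWithinAt
  have hd' : ∀ x ∈ interior (Icc s t), F.lam ≤ deriv F.f x := by
    intro x hx
    obtain ⟨d, hd, hld⟩ := hder x (interior_subset hx)
    rw [hd.deriv]; exact le_of_lt hld
  exact (convex_Icc s t).mul_sub_le_image_sub_of_le_deriv hcont hdiff hd'
    s (left_mem_Icc.mpr hst) t (right_mem_Icc.mpr hst) hst

/-- structure of points just to the left of `p` -/
lemma locLeft (p : ℝ) :
    (∃ (j : Fin F.m) (k : ℤ), F.u j + (k:ℝ) < p ∧ p ≤ F.v j + k) ∨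
    (∃ δ > 0, ∀ x, p - δ < x → x < p →
      ∀ (j : Fin F.m) (k : ℤ), x ∉ Icc (F.u j + (k:ℝ)) (F.v j + k)) := by
  by_cases h : ∃ (j : Fin F.m) (k : ℤ), F.u j + (k:ℝ) < p ∧ p ≤ F.v j + k
  · exact Or.inl h
  push_neg at h
  right
  have hne : (Finset.univ : Finset (Fin F.m)).Nonempty := by
    have : 0 < F.m := F.hm
    exact ⟨⟨0, this⟩, Finset.mem_univ _⟩
  refine ⟨(Finset.univ.inf' hne fun j => p - F.v j - (⌈p - F.v j⌉ - 1)), ?_, ?_⟩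
  · rw [gt_iff_lt, Finset.lt_inf'_iff]
    intro j _
    have := Int.ceil_lt_add_one (p - F.v j)
    push_cast
    linarith
  · intro x hx1 hx2 j k hmem
    have h1 : F.u j + (k:ℝ) < p := lt_of_le_of_lt hmem.1 hx2
    have h2 : F.v j + (k:ℝ) < p := h j k h1
    have hk : (k:ℝ) < p - F.v j := by linarith
    have hk' : k < ⌈p - F.v j⌉ := Int.lt_ceil.mpr hk
    have hk'' : (k:ℝ) + 1 ≤ (⌈p - F.v j⌉:ℝ) := by
      have : k + 1 ≤ ⌈p - F.v j⌉ := hk'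
      exact_mod_cast this
    have hinf : (Finset.univ.inf' hne fun j => p - F.v j - (⌈p - F.v j⌉ - 1)) ≤
        p - F.v j - (⌈p - F.v j⌉ - 1) := Finset.inf'_le _ (Finset.mem_univ j)
    have : x ≤ F.v j + k := hmem.2
    linarith

/-- structure of points just to the right of `p` -/
lemma locRight (p : ℝ) :
    (∃ (j : Fin F.m) (k : ℤ), F.u j + (k:ℝ) ≤ p ∧ p < F.v j + k) ∨
    (∃ δ > 0, ∀ x, p < x → x < p + δ →
      ∀ (j : Fin F.m) (k : ℤ), x ∉ Icc (F.u j + (k:ℝ)) (F.v j + k)) := by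
  by_cases h : ∃ (j : Fin F.m) (k : ℤ), F.u j + (k:ℝ) ≤ p ∧ p < F.v j + k
  · exact Or.inl h
  push_neg at h
  right
  have hne : (Finset.univ : Finset (Fin F.m)).Nonempty := ⟨⟨0, F.hm⟩, Finset.mem_univ _⟩
  refine ⟨(Finset.univ.inf' hne fun j => F.u j + (⌊p - F.u j⌋ + 1) - p), ?_, ?_⟩
  · rw [gt_iff_lt, Finset.lt_inf'_iff]
    intro j _
    have := Int.sub_one_lt_floor (p - F.u j)
    push_cast
    linarith
  · intro x hx1 hx2 j k hmem
    have h1 : p < F.v j + (k:ℝ) := lt_of_lt_of_le hx1 hmem.2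
    have h2 : p < F.u j + (k:ℝ) := by
      by_contra hc; push_neg at hc
      exact absurd (h j k hc) (not_le.mpr h1)
    have hk : p - F.u j < (k:ℝ) := by linarith
    have hk' : ⌊p - F.u j⌋ < k := Int.floor_lt.mpr hk
    have hk'' : ((⌊p - F.u j⌋:ℝ) + 1) ≤ (k:ℝ) := by
      have : ⌊p - F.u j⌋ + 1 ≤ k := hk'
      exact_mod_cast this
    have hinf : (Finset.univ.inf' hne fun j => F.u j + (⌊p - F.u j⌋ + 1) - p) ≤
        F.u j + (⌊p - F.u j⌋ + 1) - p := Finset.inf'_le _ (Finset.mem_univ j)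
    have : F.u j + (k:ℝ) ≤ x := hmem.1
    linarith

/-- uniform expansion when the graph is entirely above the diagonal -/
lemma unifA (h : ∀ x, x < F.f x) : ∃ ε > 0, ∀ x, x + ε ≤ F.f x := by
  have hloc : ∀ p : ℝ, ∃ ε > 0, ∃ U ∈ nhds p, ∀ x ∈ U, x + ε ≤ F.f x := by
    intro p
    have hgp : 0 < F.f p - p := by linarith [h p]
    rcases F.locLeft p with ⟨j, k, hk1, hk2⟩ | ⟨δ, hδ, hE⟩
    · refine ⟨(F.f p - p)/2, by linarith, Ioo (F.u j + k) (p + (F.f p - p)/2),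
        Ioo_mem_nhds hk1 (by linarith), ?_⟩
      intro x hx
      rcases le_or_gt p x with hpx | hpx
      · have : F.f p ≤ F.f x := F.mono hpx
        have := hx.2
        linarith
      · have hxm : x ∈ Icc (F.u j + (k:ℝ)) (F.v j + k) := ⟨le_of_lt hx.1, by linarith⟩
        have hpm : p ∈ Icc (F.u j + (k:ℝ)) (F.v j + k) := ⟨le_of_lt hk1, hk2⟩
        have e1 := F.flat_val j k hxm
        have e2 := F.flat_val j k hpm
        have : F.f x = F.f p := by rw [e1, e2]
        linarith
    · have hx₀ : p - δ/2 < p := by linarith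
      have hg₀ : 0 < F.f (p - δ/2) - (p - δ/2) := by linarith [h (p - δ/2)]
      refine ⟨min (F.f (p - δ/2) - (p - δ/2)) ((F.f p - p)/2), by positivity,
        Ioo (p - δ/2) (p + (F.f p - p)/2), Ioo_mem_nhds hx₀ (by linarith), ?_⟩
      intro x hx
      rcases le_or_gt p x with hpx | hpx
      · have h1 : F.f p ≤ F.f x := F.mono hpx
        have h2 := hx.2
        have := min_le_right (F.f (p - δ/2) - (p - δ/2)) ((F.f p - p)/2)
        linarith
      · have hmvt : F.lam * (x - (p - δ/2)) ≤ F.f x - F.f (p - δ/2) := by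
          refine F.mvt (le_of_lt hx.1) ?_
          intro y hy j k
          exact hE y (by linarith [hy.1]) (by linarith [hy.2]) j k
        have hlam := F.hlam
        have hxx : p - δ/2 ≤ x := le_of_lt hx.1
        have h1 : (x - (p - δ/2)) ≤ F.lam * (x - (p - δ/2)) := by nlinarith
        have := min_le_left (F.f (p - δ/2) - (p - δ/2)) ((F.f p - p)/2)
        linarith
  choose ε hε U hU hUb using hloc
  obtain ⟨t, -, ht⟩ :=
    (isCompact_Icc : IsCompact (Icc (0:ℝ) 1)).elim_nhds_subcover U (fun x _ => hU x)
  have htne : t.Nonempty := by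
    by_contra hte
    rw [Finset.not_nonempty_iff_eq_empty] at hte
    have := ht (left_mem_Icc.mpr zero_le_one)
    simp [hte] at this
  refine ⟨t.inf' htne ε, by rw [gt_iff_lt, Finset.lt_inf'_iff]; exact fun j _ => hε j, ?_⟩
  intro x
  have hfr : Int.fract x ∈ Icc (0:ℝ) 1 := ⟨Int.fract_nonneg x, (Int.fract_lt_one x).le⟩
  have hmem := ht hfr
  rw [Set.mem_iUnion₂] at hmem
  obtain ⟨p, hpt, hxU⟩ := hmem
  have hb : Int.fract x + ε p ≤ F.f (Int.fract x) := hUb p _ hxU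
  have hper := F.per (Int.fract x) ⌊x⌋
  have hfx : Int.fract x + (⌊x⌋:ℝ) = x := Int.fract_add_floor x
  have hinf : t.inf' htne ε ≤ ε p := Finset.inf'_le _ hpt
  rw [hfx] at hper
  linarith

/-- uniform contraction when the graph is entirely below the diagonal -/
lemma unifB (h : ∀ x, F.f x < x) : ∃ ε > 0, ∀ x, F.f x ≤ x - ε := by
  have hloc : ∀ p : ℝ, ∃ ε > 0, ∃ U ∈ nhds p, ∀ x ∈ U, F.f x ≤ x - ε := by
    intro p
    have hgp : 0 < p - F.f p := by linarith [h p]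
    rcases F.locRight p with ⟨j, k, hk1, hk2⟩ | ⟨δ, hδ, hE⟩
    · refine ⟨(p - F.f p)/2, by linarith, Ioo (p - (p - F.f p)/2) (F.v j + k),
        Ioo_mem_nhds (by linarith) hk2, ?_⟩
      intro x hx
      rcases le_or_gt x p with hpx | hpx
      · have : F.f x ≤ F.f p := F.mono hpx
        have := hx.1
        linarith
      · have hxm : x ∈ Icc (F.u j + (k:ℝ)) (F.v j + k) := ⟨by linarith, le_of_lt hx.2⟩
        have hpm : p ∈ Icc (F.u j + (k:ℝ)) (F.v j + k) := ⟨hk1, le_of_lt hk2⟩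
        have e1 := F.flat_val j k hxm
        have e2 := F.flat_val j k hpm
        have : F.f x = F.f p := by rw [e1, e2]
        linarith
    · have hy₀ : p < p + δ/2 := by linarith
      have hg₀ : 0 < (p + δ/2) - F.f (p + δ/2) := by linarith [h (p + δ/2)]
      refine ⟨min ((p + δ/2) - F.f (p + δ/2)) ((p - F.f p)/2), by positivity,
        Ioo (p - (p - F.f p)/2) (p + δ/2), Ioo_mem_nhds (by linarith) hy₀, ?_⟩
      intro x hx
      rcases le_or_gt x p with hpx | hpx
      · have h1 : F.f x ≤ F.f p := F.mono hpx
        have h2 := hx.1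
        have := min_le_right ((p + δ/2) - F.f (p + δ/2)) ((p - F.f p)/2)
        linarith
      · have hmvt : F.lam * ((p + δ/2) - x) ≤ F.f (p + δ/2) - F.f x := by
          refine F.mvt (le_of_lt hx.2) ?_
          intro y hy j k
          exact hE y (by linarith [hy.1]) (by linarith [hy.2]) j k
        have hlam := F.hlam
        have hxx : x ≤ p + δ/2 := le_of_lt hx.2
        have h1 : ((p + δ/2) - x) ≤ F.lam * ((p + δ/2) - x) := by nlinarith
        have := min_le_left ((p + δ/2) - F.f (p + δ/2)) ((p - F.f p)/2)
        linarith
  choose ε hε U hU hUb using hloc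
  obtain ⟨t, -, ht⟩ :=
    (isCompact_Icc : IsCompact (Icc (0:ℝ) 1)).elim_nhds_subcover U (fun x _ => hU x)
  have htne : t.Nonempty := by
    by_contra hte
    rw [Finset.not_nonempty_iff_eq_empty] at hte
    have := ht (left_mem_Icc.mpr zero_le_one)
    simp [hte] at this
  refine ⟨t.inf' htne ε, by rw [gt_iff_lt, Finset.lt_inf'_iff]; exact fun j _ => hε j, ?_⟩
  intro x
  have hfr : Int.fract x ∈ Icc (0:ℝ) 1 := ⟨Int.fract_nonneg x, (Int.fract_lt_one x).le⟩
  have hmem := ht hfr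
  rw [Set.mem_iUnion₂] at hmem
  obtain ⟨p, hpt, hxU⟩ := hmem
  have hb : F.f (Int.fract x) ≤ Int.fract x - ε p := hUb p _ hxU
  have hper := F.per (Int.fract x) ⌊x⌋
  have hfx : Int.fract x + (⌊x⌋:ℝ) = x := Int.fract_add_floor x
  have hinf : t.inf' htne ε ≤ ε p := Finset.inf'_le _ hpt
  rw [hfx] at hper
  linarith

/-- the smallest "below-diagonal" point above a "above-diagonal" point is fixed -/
lemma inf_fixed {a b : ℝ} (hab : a ≤ b) (ha : a ≤ F.f a) (hb : F.f b ≤ b) :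
    ∃ c ∈ Icc a b, F.f c = c ∧ ∀ x ∈ Ico a c, x < F.f x := by
  set T := {x ∈ Icc a b | F.f x ≤ x} with hT
  have hbT : b ∈ T := ⟨right_mem_Icc.mpr hab, hb⟩
  have hne : T.Nonempty := ⟨b, hbT⟩
  have hbdd : BddBelow T := ⟨a, fun t ht => ht.1.1⟩
  set c := sInf T with hc
  have hca : a ≤ c := le_csInf hne fun t ht => ht.1.1
  have hcb : c ≤ b := csInf_le hbdd hbT
  have hfc_le : F.f c ≤ c := by
    apply le_csInf hne
    intro t ht
    exact le_trans (F.mono (csInf_le hbdd ht)) ht.2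
  have hIco : ∀ x ∈ Ico a c, x < F.f x := by
    intro x hx
    have hxT : x ∉ T := fun hxT => absurd (csInf_le hbdd hxT) (not_le.mpr hx.2)
    by_contra hc'
    push_neg at hc'
    exact hxT ⟨⟨hx.1, le_trans (le_of_lt hx.2) hcb⟩, hc'⟩
  have hfc : F.f c = c := by
    by_contra hne'
    have hlt : F.f c < c := lt_of_le_of_ne hfc_le hne'
    have hac : a < c := by
      rcases eq_or_lt_of_le hca with he | h
      · exfalso
        have h1 : F.f a ≤ F.f c := F.mono (le_of_eq he)
        rw [← he] at hlt
        linarith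
      · exact h
    have hx1 : max a ((F.f c + c)/2) < c := max_lt hac (by linarith)
    have hx2 : a ≤ max a ((F.f c + c)/2) := le_max_left _ _
    have h3 := hIco _ ⟨hx2, hx1⟩
    have hxc : F.f (max a ((F.f c + c)/2)) ≤ F.f c := F.mono (le_of_lt hx1)
    have h4 : (F.f c + c)/2 ≤ max a ((F.f c + c)/2) := le_max_right _ _
    linarith
  exact ⟨c, ⟨hca, hcb⟩, hfc, hIco⟩

end FlatSpotCircleMap

/-- A circle map with flat spots, expanding outside them, with rotation number
`0` has a fixed point lying in one of the flat spots. -/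
theorem fixed_point_in_flat_spot (F : FlatSpotCircleMap)
    (hρ : Tendsto (fun n : ℕ => F.f^[n] 0 / n) atTop (nhds 0)) :
    ∃ (j : Fin F.m) (x : ℝ) (k : ℤ),
      x ∈ Set.Icc (F.u j + k) (F.v j + k) ∧ F.f x = x := by
  by_cases h1 : ∃ p, F.f p ≤ p
  · by_cases h2 : ∃ q, q ≤ F.f q
    · obtain ⟨b₀, hb₀⟩ := h1
      obtain ⟨a₀, ha₀⟩ := h2
      have hk₀ : a₀ ≤ b₀ + ((max 0 ⌈a₀ - b₀⌉ : ℤ):ℝ) := by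
        have hcl : a₀ - b₀ ≤ (⌈a₀ - b₀⌉ : ℝ) := Int.le_ceil _
        have hmx : ((⌈a₀-b₀⌉:ℤ):ℝ) ≤ ((max 0 ⌈a₀ - b₀⌉ : ℤ):ℝ) := by
          exact_mod_cast le_max_right (0:ℤ) ⌈a₀-b₀⌉
        linarith
      have hfb : F.f (b₀ + ((max 0 ⌈a₀ - b₀⌉ : ℤ):ℝ)) ≤ b₀ + ((max 0 ⌈a₀ - b₀⌉ : ℤ):ℝ) := by
        rw [F.per]; linarith
      obtain ⟨c, hc, hfc, -⟩ := F.inf_fixed hk₀ ha₀ hfb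
      by_cases hcf : ∃ (j : Fin F.m) (k : ℤ), c ∈ Set.Icc (F.u j + (k:ℝ)) (F.v j + k)
      · obtain ⟨j, k, hm⟩ := hcf
        exact ⟨j, c, k, hm, hfc⟩
      · push_neg at hcf
        obtain ⟨d, hd, hld⟩ := F.expand c hcf
        obtain ⟨δ, hδ, hR, hL⟩ := FlatSpotCircleMap.slope_bounds hd (lt_trans F.hlam hld)
        have hmin : 0 < min δ 1 := lt_min hδ one_pos
        have hac : c < c + min δ 1 / 2 := by linarith
        have ha_lt : c + min δ 1 / 2 < c + δ := by
          have := min_le_left δ 1; linarith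
        have hfa : c + min δ 1 / 2 < F.f (c + min δ 1 / 2) := by
          have := hR _ hac ha_lt
          linarith
        have hab1 : c + min δ 1 / 2 ≤ c + 1 := by
          have := min_le_right δ 1; linarith
        have hfb1 : F.f (c+1) ≤ c+1 := by rw [F.deg, hfc]
        obtain ⟨y, hy, hfy, hIco⟩ := F.inf_fixed hab1 (le_of_lt hfa) hfb1
        by_cases hyf : ∃ (j : Fin F.m) (k : ℤ), y ∈ Set.Icc (F.u j + (k:ℝ)) (F.v j + k)
        · obtain ⟨j, k, hm⟩ := hyf
          exact ⟨j, y, k, hm, hfy⟩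
        · exfalso
          push_neg at hyf
          obtain ⟨d₂, hd₂, hld₂⟩ := F.expand y hyf
          obtain ⟨δ₂, hδ₂, hR₂, hL₂⟩ := FlatSpotCircleMap.slope_bounds hd₂ (lt_trans F.hlam hld₂)
          have hay : c + min δ 1 / 2 < y := by
            rcases eq_or_lt_of_le hy.1 with he | h
            · exfalso; rw [← he] at hfy; linarith
            · exact h
          have hx_lt : max (y - δ₂/2) ((c + min δ 1 / 2 + y)/2) < y :=
            max_lt (by linarith) (by linarith)
          have hx_gt : y - δ₂ < max (y - δ₂/2) ((c + min δ 1 / 2 + y)/2) := by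
            have := le_max_left (y - δ₂/2) ((c + min δ 1 / 2 + y)/2); linarith
          have hx_a : c + min δ 1 / 2 ≤ max (y - δ₂/2) ((c + min δ 1 / 2 + y)/2) :=
            le_trans (by linarith) (le_max_right _ _)
          have h5 := hL₂ _ hx_gt hx_lt
          have h6 := hIco _ ⟨hx_a, hx_lt⟩
          linarith
    · exfalso
      push_neg at h2
      obtain ⟨ε, hε, hub⟩ := F.unifB h2
      have hit : ∀ n : ℕ, F.f^[n] 0 ≤ -((n:ℝ)*ε) := by
        intro n
        induction n with
        | zero => simp
        | succ n ih =>
            rw [Function.iterate_succ_apply']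
            have h3 := hub (F.f^[n] 0)
            have h4 := F.mono (le_trans ih (le_refl _))
            push_cast
            nlinarith [F.mono ih]
      have hev : ∀ᶠ n : ℕ in atTop, F.f^[n] 0 / n ≤ -ε := by
        filter_upwards [eventually_ge_atTop 1] with n hn
        have hn' : (0:ℝ) < n := by exact_mod_cast hn
        rw [div_le_iff₀ hn']
        have := hit n
        nlinarith
      have := le_of_tendsto hρ hev
      linarith
  · exfalso
    push_neg at h1
    obtain ⟨ε, hε, hub⟩ := F.unifA h1
    have hit : ∀ n : ℕ, (n:ℝ)*ε ≤ F.f^[n] 0 := by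
      intro n
      induction n with
      | zero => simp
      | succ n ih =>
          rw [Function.iterate_succ_apply']
          have h3 := hub (F.f^[n] 0)
          push_cast
          nlinarith
    have hev : ∀ᶠ n : ℕ in atTop, ε ≤ F.f^[n] 0 / n := by
      filter_upwards [eventually_ge_atTop 1] with n hn
      have hn' : (0:ℝ) < n := by exact_mod_cast hn
      rw [le_div_iff₀ hn']
      have := hit n
      nlinarith
    have := ge_of_tendsto hρ hev
    linarith
end

section
/- Let y₁(a,b) = (H₁(a,b) - aπ/2)/b and y₂(a,b) = (H₂(a,b) - aπ/2)/b, where H₁ = b·y_Γ₁ - a·x_Γ₁ + K and H₂ = b·y_Γ₂ - a·x_Γ₂ - K with ∂H₁/∂a = π/2 - μ, ∂H₂/∂a = -π/2 + μ, and μ = (arcsin(b+a) + arcsin(b-a))/2. If 0 < a, b ≤ 0.1 and a ≤ 1.5b, then ∂y₁/∂a = -μ/b < -1 and ∂y₂/∂a = (-π + μ)/b < -1. -/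
open Real

lemma f_deriv (c : ℝ) (hc : |c| < 1) :
    HasDerivAt (fun x : ℝ => Real.sqrt (1 - x ^ 2) + x * Real.arcsin x) (Real.arcsin c) c := by
  have hc1 : c < 1 := lt_of_le_of_lt (le_abs_self c) hc
  have hc2 : -1 < c := neg_lt_of_abs_lt hc
  have hpos : 0 < 1 - c ^ 2 := by nlinarith [abs_nonneg c, sq_abs c]
  have hs : 0 < Real.sqrt (1 - c ^ 2) := Real.sqrt_pos.mpr hpos
  have h1 : HasDerivAt (fun x : ℝ => 1 - x ^ 2) (-(2 * c)) c := by
    simpa using ((hasDerivAt_pow 2 c).const_sub 1)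
  have h2 : HasDerivAt (fun x : ℝ => Real.sqrt (1 - x ^ 2))
      (1 / (2 * Real.sqrt (1 - c ^ 2)) * (-(2 * c))) c :=
    (Real.hasDerivAt_sqrt (ne_of_gt hpos)).comp c h1
  have h3 : HasDerivAt Real.arcsin (1 / Real.sqrt (1 - c ^ 2)) c :=
    Real.hasDerivAt_arcsin (by linarith) (by linarith)
  have h4 : HasDerivAt (fun x : ℝ => x * Real.arcsin x)
      (1 * Real.arcsin c + c * (1 / Real.sqrt (1 - c ^ 2))) c :=
    (hasDerivAt_id c).mul h3
  have := h2.add h4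
  exact this.congr_deriv (by field_simp; ring)

lemma arcsin_sub_strictMono : StrictMonoOn (fun x : ℝ => Real.arcsin x - x) (Set.Icc 0 1) := by
  apply strictMonoOn_of_deriv_pos (convex_Icc 0 1)
  · exact (Real.continuous_arcsin.sub continuous_id).continuousOn
  · intro x hx
    rw [interior_Icc] at hx
    have hx0 := hx.1
    have hx1 := hx.2
    have hpos : 0 < 1 - x ^ 2 := by nlinarith
    have hd : DifferentiableAt ℝ Real.arcsin x :=
      Real.differentiableAt_arcsin.mpr ⟨by linarith, by linarith⟩
    rw [deriv_fun_sub hd differentiableAt_fun_id, Real.deriv_arcsin, deriv_id'']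
    have hs : Real.sqrt (1 - x ^ 2) < 1 := by
      nlinarith [Real.sq_sqrt hpos.le, Real.sqrt_nonneg (1 - x ^ 2)]
    have hs0 : 0 < Real.sqrt (1 - x ^ 2) := Real.sqrt_pos.mpr hpos
    have : 1 < 1 / Real.sqrt (1 - x ^ 2) := (one_lt_div hs0).mpr hs
    linarith

/-- Monotonicity of the flat spot heights for the Hamiltonian flow:
with `K a = (f(b-a) - f(b+a))/2`, `f x = √(1-x²) + x·arcsin x`,
`y₁ a = (b·y_Γ₁ + K a)/b` and `y₂ a = (b·y_Γ₂ - aπ - K a)/b`, for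
`0 < a, b ≤ 0.1` with `a ≤ 1.5 b` we have `∂y₁/∂a = -μ/b < -1` and
`∂y₂/∂a = (-π + μ)/b < -1`, where `μ = (arcsin(b+a) + arcsin(b-a))/2`. -/
theorem flat_spot_heights_decrease (a b yΓ₁ yΓ₂ : ℝ)
    (ha : 0 < a) (ha' : a ≤ 0.1) (hb : 0 < b) (hb' : b ≤ 0.1)
    (hab : a ≤ 1.5 * b) :
    HasDerivAt (fun a : ℝ =>
        (b * yΓ₁ + ((Real.sqrt (1 - (b - a) ^ 2) + (b - a) * Real.arcsin (b - a))
          - (Real.sqrt (1 - (b + a) ^ 2) + (b + a) * Real.arcsin (b + a))) / 2) / b)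
      (-((Real.arcsin (b + a) + Real.arcsin (b - a)) / 2) / b) a ∧
    HasDerivAt (fun a : ℝ =>
        (b * yΓ₂ - a * π - ((Real.sqrt (1 - (b - a) ^ 2) + (b - a) * Real.arcsin (b - a))
          - (Real.sqrt (1 - (b + a) ^ 2) + (b + a) * Real.arcsin (b + a))) / 2) / b)
      ((-π + (Real.arcsin (b + a) + Real.arcsin (b - a)) / 2) / b) a ∧
    -((Real.arcsin (b + a) + Real.arcsin (b - a)) / 2) / b < -1 ∧
    (-π + (Real.arcsin (b + a) + Real.arcsin (b - a)) / 2) / b < -1 := by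
  have hbm : |b - a| < 1 := by rw [abs_lt]; constructor <;> linarith
  have hbp : |b + a| < 1 := by rw [abs_lt]; constructor <;> linarith
  -- derivative of the inner maps
  have hsub : HasDerivAt (fun x : ℝ => b - x) (-1) a := by
    simpa using (hasDerivAt_id a).const_sub b
  have hadd : HasDerivAt (fun x : ℝ => b + x) 1 a := by
    simpa using (hasDerivAt_id a).const_add b
  have hF1 : HasDerivAt
      (fun x : ℝ => Real.sqrt (1 - (b - x) ^ 2) + (b - x) * Real.arcsin (b - x))
      (Real.arcsin (b - a) * (-1)) a := by
    have := (f_deriv (b - a) hbm).comp a hsub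
    simpa [Function.comp_def] using this
  have hF2 : HasDerivAt
      (fun x : ℝ => Real.sqrt (1 - (b + x) ^ 2) + (b + x) * Real.arcsin (b + x))
      (Real.arcsin (b + a) * 1) a := by
    have := (f_deriv (b + a) hbp).comp a hadd
    simpa [Function.comp_def] using this
  have hG := (hF1.sub hF2).div_const 2
  have hd1 := ((hG.const_add (b * yΓ₁)).div_const b)
  have hlin : HasDerivAt (fun x : ℝ => b * yΓ₂ - x * π) (-(1 * π)) a :=
    ((hasDerivAt_id a).mul_const π).const_sub (b * yΓ₂)
  have hd2 := ((hlin.sub hG).div_const b)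
  -- the key inequality: arcsin (b+a) + arcsin (b-a) > 2b
  have hmemS : b + a ∈ Set.Icc (0:ℝ) 1 := ⟨by linarith, by linarith⟩
  have hmem0 : (0:ℝ) ∈ Set.Icc (0:ℝ) 1 := ⟨le_refl 0, by norm_num⟩
  have hS : Real.arcsin (b + a) - (b + a) > 0 := by
    have := arcsin_sub_strictMono hmem0 hmemS (by linarith)
    simpa using this
  have key : Real.arcsin (b + a) + Real.arcsin (b - a) > 2 * b := by
    rcases le_or_gt 0 (b - a) with ht | ht
    · have hmemT : b - a ∈ Set.Icc (0:ℝ) 1 := ⟨ht, by linarith⟩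
      have hT : Real.arcsin 0 - 0 ≤ Real.arcsin (b - a) - (b - a) :=
        arcsin_sub_strictMono.monotoneOn hmem0 hmemT ht
      rw [Real.arcsin_zero] at hT
      linarith
    · have hmemT : a - b ∈ Set.Icc (0:ℝ) 1 := ⟨by linarith, by linarith⟩
      have hT : Real.arcsin (a - b) - (a - b) < Real.arcsin (b + a) - (b + a) :=
        arcsin_sub_strictMono hmemT hmemS (by linarith)
      have hodd : Real.arcsin (b - a) = -Real.arcsin (a - b) := by
        rw [show b - a = -(a - b) by ring, Real.arcsin_neg]
      linarith
  have hle1 : Real.arcsin (b + a) ≤ π / 2 := Real.arcsin_le_pi_div_two _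
  have hle2 : Real.arcsin (b - a) ≤ π / 2 := Real.arcsin_le_pi_div_two _
  have hpi : π > 3 := Real.pi_gt_three
  refine ⟨?_, ?_, ?_, ?_⟩
  · exact hd1.congr_deriv (by ring)
  · exact hd2.congr_deriv (by ring)
  · rw [div_lt_iff₀ hb]; linarith
  · rw [div_lt_iff₀ hb]; linarith
end
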